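/- If J = (x_1, …, x_s) is a reduction of I_1, then for every n, rr_K(I_n) = ⋃_{k≥1} (K·I_{n+k} : (x_1^k, …, x_s^k)) and also rr_K(I_n) = ⋃_{k≥1} (K·I_{n+k} : J^k). -/

import Mathlib

/-!
Since `J ⊆ I_1`, the colon ideals by `I_1^k` are contained in those by `J^k`, which are contained
in those by `(x_1^k, …, x_s^k)`. Conversely, by pigeonhole every monomial of degree `sk + k + 1`
in the `x_i` is divisible by some `x_i^{k+1}`, and `J^t I_1^N = I_1^{N+t}` for large `N`; so if
`r (x_1^{k+1}, …, x_s^{k+1}) ⊆ K I_{n+k+1}` then `r I_1^{N+sk+k+1} ⊆ K I_{n+N+sk+k+1}`.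
-/

open IsLocalRing Polynomial

/-- Ratliff–Rush closure of a filtration `{I_n}` with respect to `K`:
`rr_K(I_n) = ⋃_{k ≥ 1} (K·I_{n+k} : I_1^k)`. -/
noncomputable def rrK {R : Type*} [CommRing R] (K : Ideal R) (I : ℕ → Ideal R) (n : ℕ) :
    Ideal R :=
  ⨆ k : ℕ, Submodule.colon (K * I (n + (k + 1))) ((I 1) ^ (k + 1) : Ideal R)

/-- `J` is a reduction of `I`. -/
def IsReduction {R : Type*} [CommRing R] (J I : Ideal R) : Prop :=
  J ≤ I ∧ ∃ n : ℕ, J * I ^ n = I ^ (n + 1)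

namespace Ideal

variable {R : Type*} [CommRing R]

theorem span_range_pow_le_span_range_pow_mul {ι : Type*} [Fintype ι] (x : ι → R) (k : ℕ) :
    span (Set.range x) ^ (Fintype.card ι * k + (k + 1)) ≤
      span (Set.range fun i => x i ^ (k + 1)) * span (Set.range x) ^ (Fintype.card ι * k) := by
  classical
  rw [span, Submodule.span_pow, Submodule.span_le]
  rintro _ hz
  obtain ⟨f, hf, rfl⟩ := Set.mem_pow_iff_prod.mp hz
  choose g hg using hf
  obtain ⟨i, hi⟩ := Fintype.exists_lt_card_fiber_of_mul_lt_card (f := g) (n := k)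
    (by simp only [Fintype.card_fin]; omega)
  obtain ⟨T, hT, hTcard⟩ := Finset.exists_subset_card_eq hi
  rw [← Finset.prod_mul_prod_compl T]
  refine mul_mem_mul (subset_span ⟨i, ?_⟩) ?_
  · have hfT : ∀ j ∈ T, f j = x i := fun j hj => by
      rw [← hg j, (Finset.mem_filter.mp (hT hj)).2]
    rw [Finset.prod_congr rfl hfT, Finset.prod_const, hTcard]
  · have hcard : Tᶜ.card = Fintype.card ι * k := by
      rw [Finset.card_compl, hTcard, Fintype.card_fin]; omega
    have hmem : ∏ j ∈ Tᶜ, f j ∈ ∏ _ ∈ Tᶜ, span (Set.range x) :=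
      prod_mem_prod fun j _ => subset_span (Set.mem_range.mpr ⟨g j, hg j⟩)
    rw [Finset.prod_const, hcard] at hmem
    exact hmem

theorem span_range_pow_le_pow {ι : Type*} (x : ι → R) (k : ℕ) :
    span (Set.range fun i => x i ^ k) ≤ span (Set.range x) ^ k :=
  span_le.mpr <| Set.range_subset_iff.mpr fun i =>
    pow_mem_pow (subset_span (Set.mem_range_self i)) k

theorem colon_le_colon_mul (M P B : Ideal R) :
    M.colon (P : Set R) ≤ (M * B).colon ((P * B : Ideal R) : Set R) := by
  intro r hr
  rw [Submodule.mem_colon] at hr ⊢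
  intro z hz
  refine Submodule.mul_induction_on hz (fun p hp b hb => ?_) (fun a b ha hb => ?_)
  · rw [smul_eq_mul, ← mul_assoc]
    exact mul_mem_mul (hr p hp) hb
  · rw [smul_add]
    exact add_mem ha hb

end Ideal

theorem IsReduction.exists_pow_mul_pow_eq {R : Type*} [CommRing R] {J I : Ideal R}
    (h : IsReduction J I) : ∃ N, ∀ t, J ^ t * I ^ N = I ^ (N + t) := by
  obtain ⟨-, N, hN⟩ := h
  refine ⟨N, fun t => ?_⟩
  induction t with
  | zero => simp
  | succ t ih =>
    calc J ^ (t + 1) * I ^ N = J * (J ^ t * I ^ N) := by ring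
      _ = J * I ^ N * I ^ t := by rw [ih, pow_add]; ring
      _ = I ^ (N + (t + 1)) := by rw [hN, ← pow_add]; ring_nf

theorem pow_one_le_of_mul_le {R : Type*} [CommRing R] {I : ℕ → Ideal R} (hI0 : I 0 = ⊤)
    (hImul : ∀ m n, I m * I n ≤ I (m + n)) (t : ℕ) : I 1 ^ t ≤ I t := by
  induction t with
  | zero => simp [hI0]
  | succ t ih => exact (pow_succ (I 1) t ▸ Ideal.mul_mono_left ih).trans (hImul t 1)

theorem colon_span_range_pow_le_rrK {R ι : Type*} [CommRing R] [Fintype ι] {I : ℕ → Ideal R}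
    (K : Ideal R) (hI0 : I 0 = ⊤) (hImul : ∀ m n, I m * I n ≤ I (m + n)) {x : ι → R}
    (hred : IsReduction (Ideal.span (Set.range x)) (I 1)) (n k : ℕ) :
    (K * I (n + (k + 1))).colon (Ideal.span (Set.range fun i => x i ^ (k + 1)) : Set R) ≤
      rrK K I n := by
  set J := Ideal.span (Set.range x)
  set P := Ideal.span (Set.range fun i => x i ^ (k + 1))
  obtain ⟨N, hN⟩ := hred.exists_pow_mul_pow_eq
  set d := Fintype.card ι * k
  set B := J ^ d * I 1 ^ N
  have hP : I 1 ^ (N + d + k + 1) ≤ P * B :=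
    calc I 1 ^ (N + d + k + 1) = J ^ (d + (k + 1)) * I 1 ^ N := by rw [hN]; ring_nf
      _ ≤ P * J ^ d * I 1 ^ N :=
        Ideal.mul_mono_left (Ideal.span_range_pow_le_span_range_pow_mul x k)
      _ = P * B := mul_assoc ..
  have hM : K * I (n + (k + 1)) * B ≤ K * I (n + (N + d + k + 1)) :=
    calc K * I (n + (k + 1)) * B
        ≤ K * I (n + (k + 1)) * (I d * I N) :=
          Ideal.mul_mono_right <| Ideal.mul_mono
            ((Ideal.pow_right_mono hred.1 d).trans (pow_one_le_of_mul_le hI0 hImul d))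
            (pow_one_le_of_mul_le hI0 hImul N)
      _ ≤ K * (I (n + (k + 1)) * I (d + N)) := by
          rw [mul_assoc]; exact Ideal.mul_mono_right (Ideal.mul_mono_right (hImul d N))
      _ ≤ K * I (n + (N + d + k + 1)) := by
          refine Ideal.mul_mono_right ((hImul _ _).trans_eq ?_)
          congr 1; omega
  calc (K * I (n + (k + 1))).colon (P : Set R)
      ≤ (K * I (n + (k + 1)) * B).colon ((P * B : Ideal R) : Set R) :=
        Ideal.colon_le_colon_mul _ _ _
    _ ≤ (K * I (n + (N + d + k + 1))).colon ((I 1 ^ (N + d + k + 1) : Ideal R) : Set R) :=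
        Submodule.colon_mono hM hP
    _ ≤ rrK K I n := le_iSup_of_le (N + d + k) le_rfl

theorem stmt2_general {R : Type*} [CommRing R]
    (I : ℕ → Ideal R) (K : Ideal R)
    (hI0 : I 0 = ⊤)
    (hImul : ∀ m n : ℕ, I m * I n ≤ I (m + n))
    (s : ℕ) (x : Fin s → R)
    (hred : IsReduction (Ideal.span (Set.range x)) (I 1)) :
    ∀ n : ℕ,
      rrK K I n =
        (⨆ k : ℕ, Submodule.colon (K * I (n + (k + 1)))
          (Ideal.span (Set.range fun i => x i ^ (k + 1)))) ∧
      rrK K I n =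
        ⨆ k : ℕ, Submodule.colon (K * I (n + (k + 1)))
          ((Ideal.span (Set.range x)) ^ (k + 1) : Ideal R) := by
  intro n
  have hI_J : rrK K I n ≤ ⨆ k : ℕ, Submodule.colon (K * I (n + (k + 1)))
      ((Ideal.span (Set.range x)) ^ (k + 1) : Ideal R) :=
    iSup_mono fun k => Submodule.colon_mono le_rfl (Ideal.pow_right_mono hred.1 _)
  have hJ_x : (⨆ k : ℕ, Submodule.colon (K * I (n + (k + 1)))
      ((Ideal.span (Set.range x)) ^ (k + 1) : Ideal R)) ≤
      ⨆ k : ℕ, Submodule.colon (K * I (n + (k + 1)))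
        (Ideal.span (Set.range fun i => x i ^ (k + 1))) :=
    iSup_mono fun k => Submodule.colon_mono le_rfl (Ideal.span_range_pow_le_pow x _)
  have hx_I : (⨆ k : ℕ, Submodule.colon (K * I (n + (k + 1)))
      (Ideal.span (Set.range fun i => x i ^ (k + 1)))) ≤ rrK K I n :=
    iSup_le (colon_span_range_pow_le_rrK K hI0 hImul hred n)
  exact ⟨le_antisymm (hI_J.trans hJ_x) hx_I, le_antisymm hI_J (hJ_x.trans hx_I)⟩

/-- If `J = (x_1, …, x_s)` is a reduction of `I_1`, then for every `n`,
`rr_K(I_n) = ⋃_{k ≥ 1} (K·I_{n+k} : (x_1^k, …, x_s^k))` and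
`rr_K(I_n) = ⋃_{k ≥ 1} (K·I_{n+k} : J^k)`. -/
theorem stmt2 {R : Type*} [CommRing R] [IsNoetherianRing R] [IsLocalRing R]
    (hdim : (0 : WithBot ℕ∞) < ringKrullDim R)
    (I : ℕ → Ideal R) (K : Ideal R)
    (hI0 : I 0 = ⊤)
    (hImul : ∀ m n : ℕ, I m * I n ≤ I (m + n))
    (hIstab : ∃ N : ℕ, ∀ n ≥ N, I 1 * I n = I (n + 1))
    (hIprim : (I 1).radical = maximalIdeal R)
    (hK : ∀ n : ℕ, I (n + 1) ≤ K * I n)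
    (s : ℕ) (x : Fin s → R)
    (hred : IsReduction (Ideal.span (Set.range x)) (I 1)) :
    ∀ n : ℕ,
      rrK K I n =
        (⨆ k : ℕ, Submodule.colon (K * I (n + (k + 1)))
          (Ideal.span (Set.range fun i => x i ^ (k + 1)))) ∧
      rrK K I n =
        ⨆ k : ℕ, Submodule.colon (K * I (n + (k + 1)))
          ((Ideal.span (Set.range x)) ^ (k + 1) : Ideal R) :=
  stmt2_general I K hI0 hImul s x hred
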